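/- arXiv:0710.4152 — 4 statements merged into one kernel-verified Lean document; each statement's English description precedes it below -/
import Mathlib

section
/- Let E be a finite type, P ∈ Finset E, V a natural number, and k, ∂_G, ∂_R : Finset E → ℕ functions satisfying (i) 2·k(A) + |A| = V + ∂_G(A) for every A ∈ Finset E, and (ii) ∂_G(A) = ∂_R(A Δ P) for every A ∈ Finset E (Δ = symmetric difference). Let R be a commutative ring and q, s, x₊, x₋ ∈ R with s² = q and x₊·x₋ = 1, and define edge weights w(e) = s·x₊ for e ∈ P and w(e) = s·x₋ for e ∉ P. Then ∑_{A ∈ Finset E} q^{k(A)} ∏_{e ∈ A} w(e) = s^V · x₊^{|P|} · ∑_{B ∈ Finset E} s^{∂_R(B)} · x₋^{|B|}. -/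
/-!
Reindex the Potts sum by `B = A ∆ P`. Since `q = s²`, the term of `A` is
`s ^ (2 k(A) + |A|) · x₊ ^ |A ∩ P| · x₋ ^ |A \ P|`; Euler's formula turns the power of `s` into
`s ^ (V + ∂_G(A))`, multiplying by `(x₊ x₋) ^ |P \ A| = 1` turns the signs into
`x₊ ^ |P| · x₋ ^ |A ∆ P|`, and `∂_G(A) = ∂_R(A ∆ P)`.
-/

open Finset

namespace Finset

variable {E : Type*} [DecidableEq E]

theorem card_symmDiff (A P : Finset E) : #(symmDiff A P) = #(A \ P) + #(P \ A) := by
  rw [symmDiff_def, sup_eq_union, card_union_of_disjoint disjoint_sdiff_sdiff]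

theorem prod_ite_mem_mul_eq {M : Type*} [CommMonoid M] (A P : Finset E) (s u v : M) :
    ∏ e ∈ A, (if e ∈ P then s * u else s * v) = s ^ #A * (u ^ #(A ∩ P) * v ^ #(A \ P)) := by
  rw [prod_ite, prod_const, prod_const, filter_mem_eq_inter, ← sdiff_eq_filter,
    ← card_inter_add_card_sdiff A P, mul_pow, mul_pow, pow_add]
  ac_rfl

theorem pow_card_inter_mul_pow_card_sdiff_of_mul_eq_one {M : Type*} [CommMonoid M]
    {u v : M} (huv : u * v = 1) (A P : Finset E) :
    u ^ #(A ∩ P) * v ^ #(A \ P) = u ^ #P * v ^ #(symmDiff A P) := by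
  calc u ^ #(A ∩ P) * v ^ #(A \ P) = u ^ #(A ∩ P) * v ^ #(A \ P) * (u * v) ^ #(P \ A) := by
        rw [huv, one_pow, mul_one]
    _ = u ^ #P * v ^ #(symmDiff A P) := by
        rw [card_symmDiff, ← card_inter_add_card_sdiff P A, inter_comm P A, mul_pow, pow_add,
          pow_add]
        ac_rfl

end Finset

/-- The algebraic content of Proposition 3.1: the Potts partition function of an
edge-signed plane graph as a state sum of the unsigned ribbon graph. -/
theorem potts_eq_unsigned_ribbon_state_sum {E : Type*} [Fintype E] [DecidableEq E]
    (P : Finset E) (V : ℕ) (k bdG bdR : Finset E → ℕ)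
    (h1 : ∀ A : Finset E, 2 * k A + A.card = V + bdG A)
    (h2 : ∀ A : Finset E, bdG A = bdR (symmDiff A P))
    (R : Type*) [CommRing R] (q s xp xm : R) (hs : s ^ 2 = q) (hx : xp * xm = 1)
    (w : E → R) (hw : ∀ e, w e = if e ∈ P then s * xp else s * xm) :
    ∑ A : Finset E, q ^ k A * ∏ e ∈ A, w e =
      s ^ V * xp ^ P.card * ∑ B : Finset E, s ^ bdR B * xm ^ B.card := by
  rw [mul_sum]
  refine Fintype.sum_bijective (symmDiff · P) (symmDiff_left_involutive P).bijective _ _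
    fun A => ?_
  calc q ^ k A * ∏ e ∈ A, w e
      = s ^ (2 * k A + #A) * (xp ^ #(A ∩ P) * xm ^ #(A \ P)) := by
        simp only [hw, prod_ite_mem_mul_eq, ← hs, ← pow_mul, pow_add, mul_assoc]
    _ = s ^ (V + bdG A) * (xp ^ #P * xm ^ #(symmDiff A P)) := by
        rw [h1, pow_card_inter_mul_pow_card_sdiff_of_mul_eq_one hx]
    _ = s ^ V * xp ^ #P * (s ^ bdR (symmDiff A P) * xm ^ #(symmDiff A P)) := by
        rw [h2, pow_add]
        ring
end

section
/- Let E be a finite type, V a natural number, and k, ∂ : Finset E → ℕ arbitrary functions; for B ∈ Finset E set r(B) = (V : ℤ) − k(B) and n(B) = (|B| : ℤ) − r(B). Let F be a field and a ∈ F with a ≠ 0 and a⁴ ≠ −1, and set δ := −a² − a⁻² (so δ ≠ 0). Then δ⁻¹ · a^{|E|} · ∑_{B ∈ Finset E} δ^{∂(B)} · a^{−2|B|} = δ^{k(E)−1} · a^{|E|+2k(E)−2V} · ∑_{B ∈ Finset E} (−a⁴−1)^{k(B)−k(E)} · (a⁻²·δ)^{n(B)} · (δ⁻¹)^{k(B)−∂(B)+n(B)},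 where all integer exponents are interpreted via zpow. -/
/-!
Every summand on either side is a monomial `a ^ p * δ ^ q` with integer exponents, because
`X - 1 = -a⁴ - 1 = a² δ`. Both summands indexed by `B` reduce to `a ^ (|E| - 2|B|) * δ ^ (∂(B) - 1)`:
the exponents of `k`, `V` and `k(E)` cancel, so the identity holds term by term.
-/

section ZpowMonomial

variable {G₀ : Type*} [CommGroupWithZero G₀]

def zpowMonomial (x y : G₀) (p q : ℤ) : G₀ := x ^ p * y ^ q

theorem zpow_eq_zpowMonomial_left (x y : G₀) (p : ℤ) : x ^ p = zpowMonomial x y p 0 := by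
  rw [zpowMonomial, zpow_zero, mul_one]

theorem zpow_eq_zpowMonomial_right (x y : G₀) (q : ℤ) : y ^ q = zpowMonomial x y 0 q := by
  rw [zpowMonomial, zpow_zero, one_mul]

theorem zpowMonomial_mul {x y : G₀} (hx : x ≠ 0) (hy : y ≠ 0) (p q p' q' : ℤ) :
    zpowMonomial x y p q * zpowMonomial x y p' q' = zpowMonomial x y (p + p') (q + q') := by
  simp only [zpowMonomial, zpow_add₀ hx, zpow_add₀ hy, mul_mul_mul_comm]

theorem zpowMonomial_zpow (x y : G₀) (p q e : ℤ) :
    zpowMonomial x y p q ^ e = zpowMonomial x y (p * e) (q * e) := by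
  simp only [zpowMonomial, mul_zpow, zpow_mul]

end ZpowMonomial

theorem neg_pow_four_sub_one_eq {K : Type*} [DivisionRing K] {a : K} (ha : a ≠ 0) :
    -a ^ 4 - 1 = a ^ 2 * (-a ^ 2 - a ^ (-2 : ℤ)) := by
  have h : a ^ 2 * a ^ (-2 : ℤ) = 1 := by
    rw [← zpow_natCast, ← zpow_add₀ ha]
    norm_num
  rw [mul_sub, mul_neg, h, ← pow_add]

/-- Equation (9) of the paper: the Kauffman-bracket-type state sum equals the
evaluation of the Bollobás–Riordan state sum at `X = -a⁴`, `Y = a⁻²δ`,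
`Z = δ⁻¹`, where `δ = -a² - a⁻²`; valid for arbitrary functions `k` and `∂`. -/
theorem bracket_eq_bollobas_riordan_eval {E : Type*} [Fintype E] (V : ℕ)
    (k bd : Finset E → ℕ) (F : Type*) [Field F] (a : F)
    (ha : a ≠ 0) (ha4 : a ^ 4 ≠ -1) (δ : F) (hδ : δ = -a ^ 2 - a ^ (-2 : ℤ)) :
    δ⁻¹ * a ^ Fintype.card E *
        ∑ B : Finset E, δ ^ bd B * a ^ (-2 * (B.card : ℤ)) =
      δ ^ ((k (Finset.univ : Finset E) : ℤ) - 1) *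
        a ^ ((Fintype.card E : ℤ) + 2 * (k (Finset.univ : Finset E) : ℤ) - 2 * V) *
        ∑ B : Finset E,
          (-a ^ 4 - 1) ^ ((k B : ℤ) - (k (Finset.univ : Finset E) : ℤ)) *
            (a ^ (-2 : ℤ) * δ) ^ ((B.card : ℤ) - ((V : ℤ) - k B)) *
            δ⁻¹ ^ ((k B : ℤ) - bd B + ((B.card : ℤ) - ((V : ℤ) - k B))) := by
  have hX : -a ^ 4 - 1 = a ^ 2 * δ := hδ ▸ neg_pow_four_sub_one_eq ha
  have hδ0 : δ ≠ 0 := by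
    rintro rfl
    exact ha4 (by linear_combination -hX)
  have hX' : a ^ 2 * δ = zpowMonomial a δ 2 1 := by
    rw [zpowMonomial, zpow_one, zpow_ofNat]
  have hY : a ^ (-2 : ℤ) * δ = zpowMonomial a δ (-2) 1 := by
    rw [zpowMonomial, zpow_one]
  rw [hX, hX', hY, Finset.mul_sum, Finset.mul_sum]
  refine Finset.sum_congr rfl fun B _ => ?_
  simp only [← zpow_natCast, ← zpow_neg_one, zpow_eq_zpowMonomial_left a δ,
    zpow_eq_zpowMonomial_right a δ, zpowMonomial_zpow, zpowMonomial_mul ha hδ0]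
  congr 1 <;> push_cast <;> ring
end

section
/- Let E be a finite type, V a natural number, and k, ∂ : Finset E → ℕ functions with k(E) = 1; for B ∈ Finset E set n(B) = (|B| : ℤ) − V + k(B). Let F be a field and a ∈ F with a ≠ 0 and a⁴ ≠ −1, and set δ := −a² − a⁻². Then ∑_{B ∈ Finset E} a^{|E| − 2|B|} · δ^{∂(B) − 1} = a^{|E| + 2 − 2V} · ∑_{B ∈ Finset E} (−a⁴−1)^{k(B)−1} · (a⁻²·δ)^{n(B)} · (δ⁻¹)^{k(B)−∂(B)+n(B)}, where integer exponents are interpreted via zpow. -/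
/-! Since `-a⁴ - 1 = a² δ`, every summand on the right is a monomial `a ^ m * δ ^ n`, and its
exponents collapse to `m = |E| - 2|B|` and `n = ∂(B) - 1`, independently of `V` and `k(B)`: the
identity holds summand by summand. Nonvanishing of `δ`, i.e. `a⁴ ≠ -1`, is what allows the
integer powers of `δ` to be combined. -/

section

variable {F : Type*} [Field F] {a : F}

theorem neg_pow_four_sub_one_eq_mul (ha : a ≠ 0) :
    -a ^ 4 - 1 = a ^ (2 : ℤ) * (-a ^ 2 - a ^ (-2 : ℤ)) := by
  rw [mul_sub, mul_neg, ← zpow_natCast, ← zpow_natCast, ← zpow_add₀ ha, ← zpow_add₀ ha]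
  norm_num

theorem neg_pow_two_sub_zpow_neg_two_ne_zero (ha : a ≠ 0) (ha4 : a ^ 4 ≠ -1) :
    -a ^ 2 - a ^ (-2 : ℤ) ≠ 0 := by
  intro h
  apply ha4
  linear_combination -(neg_pow_four_sub_one_eq_mul ha).trans (by rw [h, mul_zero])

theorem zpow_monomial_collapse {δ : F} (ha : a ≠ 0) (hδ : δ ≠ 0) (e c v K D : ℤ) :
    a ^ (e + 2 - 2 * v) *
        ((a ^ (2 : ℤ) * δ) ^ (K - 1) * (a ^ (-2 : ℤ) * δ) ^ (c - v + K) *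
          δ⁻¹ ^ (K - D + (c - v + K))) =
      a ^ (e - 2 * c) * δ ^ (D - 1) := by
  rw [mul_zpow, mul_zpow, inv_zpow', ← zpow_mul, ← zpow_mul,
    show e - 2 * c = (e + 2 - 2 * v) + 2 * (K - 1) + -2 * (c - v + K) by ring,
    show D - 1 = (K - 1) + (c - v + K) + -(K - D + (c - v + K)) by ring]
  simp only [zpow_add₀ ha, zpow_add₀ hδ]
  ring

end

theorem surface_bracket_eq_bollobas_riordan_general {E : Type*} [Fintype E] (V : ℕ)
    (k bd : Finset E → ℕ)
    (F : Type*) [Field F] (a : F) (ha : a ≠ 0) (ha4 : a ^ 4 ≠ -1)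
    (δ : F) (hδ : δ = -a ^ 2 - a ^ (-2 : ℤ)) :
    ∑ B : Finset E,
        a ^ ((Fintype.card E : ℤ) - 2 * (B.card : ℤ)) * δ ^ ((bd B : ℤ) - 1) =
      a ^ ((Fintype.card E : ℤ) + 2 - 2 * (V : ℤ)) *
        ∑ B : Finset E,
          (-a ^ 4 - 1) ^ ((k B : ℤ) - 1) *
            (a ^ (-2 : ℤ) * δ) ^ ((B.card : ℤ) - V + k B) *
            δ⁻¹ ^ ((k B : ℤ) - bd B + ((B.card : ℤ) - V + k B)) := by
  have hδ0 : δ ≠ 0 := hδ ▸ neg_pow_two_sub_zpow_neg_two_ne_zero ha ha4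
  rw [neg_pow_four_sub_one_eq_mul ha, ← hδ, Finset.mul_sum]
  exact Finset.sum_congr rfl fun B _ => (zpow_monomial_collapse ha hδ0 _ _ _ _ _).symm

/-- The state-sum content of Theorem 4.3 (Chmutov–Pak): the Kauffman bracket of
an alternating link diagram on a surface equals an evaluation of the
Bollobás–Riordan polynomial of its (connected) Tait graph. -/
theorem surface_bracket_eq_bollobas_riordan {E : Type*} [Fintype E] (V : ℕ)
    (k bd : Finset E → ℕ) (hk : k (Finset.univ : Finset E) = 1)
    (F : Type*) [Field F] (a : F) (ha : a ≠ 0) (ha4 : a ^ 4 ≠ -1)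
    (δ : F) (hδ : δ = -a ^ 2 - a ^ (-2 : ℤ)) :
    ∑ B : Finset E,
        a ^ ((Fintype.card E : ℤ) - 2 * (B.card : ℤ)) * δ ^ ((bd B : ℤ) - 1) =
      a ^ ((Fintype.card E : ℤ) + 2 - 2 * (V : ℤ)) *
        ∑ B : Finset E,
          (-a ^ 4 - 1) ^ ((k B : ℤ) - 1) *
            (a ^ (-2 : ℤ) * δ) ^ ((B.card : ℤ) - V + k B) *
            δ⁻¹ ^ ((k B : ℤ) - bd B + ((B.card : ℤ) - V + k B)) :=
  surface_bracket_eq_bollobas_riordan_general V k bd F a ha ha4 δ hδ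
end

section
/- Let E be a finite type, P ∈ Finset E, V a natural number, and k, ∂_G, ∂_R : Finset E → ℕ functions satisfying (i) 2·k(A) + |A| = V + ∂_G(A) for every A ∈ Finset E, and (ii) ∂_G(A) = ∂_R(A Δ P) for every A ∈ Finset E. Suppose further that for each B ∈ Finset E we are given a finite type C_B with |C_B| = ∂_R(B) and a function δ_B : C_B → Bool → ℤ with δ_B(c, true) = −δ_B(c, false) and δ_B(c, true) ∈ {1, −1} for every c. Let F be a field and a ∈ F with a ≠ 0 and a⁴ ≠ −1, and set δ := −a² − a⁻². Then δ^{−V−1} · a^{|E \ P| − |P|} · ∑_{A ∈ Finset E} (δ²)^{k(A)} · ∏_{e ∈ A} (δ · a^{2·ε(e)}) = δ⁻¹ · a^{|E|} · ∑_{B ∈ Finset E} a^{−2|B|} · ∑_{f : C_B → Bool} ∏_{c ∈ C_B} (−a²)^{δ_B(c, f(c))}, where ε(e) = 1 if e ∈ P and −1 otherwise, and integer exponents are interpreted via zpow. -/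
/-!
The sum over arrow coverings factorizes over the cycles of the smoothing, and each cycle
contributes `t + t⁻¹ = δ` with `t = -a²`; so the vertex model is
`δ⁻¹ a^|E| ∑_B a^(-2|B|) δ^(∂_R B)`. Substituting `B = A ∆ P` turns `∂_R B` into `∂_G A`;
Euler's relation then matches the powers of `δ` term by term, and counting the edges of `A`
inside and outside `P` matches the powers of `a`.
-/

open Finset

theorem Finset.prod_zpow_eq_zpow_sum {ι G : Type*} [CommGroupWithZero G] {a : G} (ha : a ≠ 0)
    (s : Finset ι) (f : ι → ℤ) : ∏ i ∈ s, a ^ f i = a ^ ∑ i ∈ s, f i := by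
  induction s using Finset.cons_induction with
  | empty => simp
  | cons i s _ ih => rw [prod_cons, sum_cons, zpow_add₀ ha, ih]

theorem zpow_add_zpow_eq_add_inv {K : Type*} [DivisionRing K] (x : K) {m n : ℤ}
    (hm : m = 1 ∨ m = -1) (hn : m = -n) : x ^ m + x ^ n = x + x⁻¹ := by
  rcases hm with rfl | rfl
  · rw [show n = -1 by omega, zpow_one, zpow_neg_one]
  · rw [show n = 1 by omega, zpow_one, zpow_neg_one, add_comm]

theorem sum_prod_zpow_eq_add_inv_pow {ι K : Type*} [Fintype ι] [DecidableEq ι] [Field K]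
    (x : K) (w : ι → Bool → ℤ) (hw : ∀ i, w i true = -w i false)
    (hw₁ : ∀ i, w i true = 1 ∨ w i true = -1) :
    ∑ f : ι → Bool, ∏ i, x ^ w i (f i) = (x + x⁻¹) ^ Fintype.card ι := by
  calc ∑ f : ι → Bool, ∏ i, x ^ w i (f i) = ∏ i, ∑ b, x ^ w i b :=
        (Fintype.prod_sum fun i b => x ^ w i b).symm
    _ = ∏ _i : ι, (x + x⁻¹) := prod_congr rfl fun i _ => by
        rw [Fintype.sum_bool, zpow_add_zpow_eq_add_inv x (hw₁ i) (hw i)]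
    _ = (x + x⁻¹) ^ Fintype.card ι := by rw [prod_const, card_univ]

theorem neg_sq_add_inv_neg_sq {K : Type*} [Field K] (a : K) :
    -a ^ 2 + (-a ^ 2)⁻¹ = -a ^ 2 - a ^ (-2 : ℤ) := by
  rw [inv_neg, zpow_neg, zpow_ofNat, sub_eq_add_neg]

theorem neg_sq_sub_zpow_neg_two_ne_zero {K : Type*} [Field K] {a : K} (ha : a ≠ 0)
    (ha₄ : a ^ 4 ≠ -1) : -a ^ 2 - a ^ (-2 : ℤ) ≠ 0 := by
  rw [zpow_neg, zpow_ofNat]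
  intro h
  apply ha₄
  field_simp at h
  linear_combination -h

section TaitGraph

variable {E : Type*} [Fintype E] [DecidableEq E]

theorem card_univ_sdiff_sub_card_add_sum_sign (P A : Finset E) :
    (#(univ \ P) : ℤ) - #P + ∑ e ∈ A, 2 * (if e ∈ P then (1 : ℤ) else -1) =
      Fintype.card E - 2 * #(symmDiff A P) := by
  have hsum : ∑ e ∈ A, 2 * (if e ∈ P then (1 : ℤ) else -1) = 2 * #(A ∩ P) - 2 * #(A \ P) := by
    simp only [mul_ite, mul_one, mul_neg]
    rw [sum_ite, sum_const, sum_const, filter_mem_eq_inter, ← sdiff_eq_filter]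
    simp only [nsmul_eq_mul]
    ring
  have hsymm : #(symmDiff A P) = #(A \ P) + #(P \ A) :=
    card_union_of_disjoint disjoint_sdiff_sdiff
  have hP : #(P ∩ A) + #(P \ A) = #P := card_inter_add_card_sdiff P A
  rw [hsum, card_univ_sdiff, Nat.cast_sub (card_le_univ P), hsymm, ← hP, inter_comm]
  push_cast
  ring

theorem potts_term_eq_vertex_term {F : Type*} [Field F] {δ a : F} (hδ : δ ≠ 0) (ha : a ≠ 0)
    (P A : Finset E) {V k g : ℕ} (h : 2 * k + #A = V + g) :
    δ ^ (-(V : ℤ) - 1) * a ^ ((#(univ \ P) : ℤ) - #P) *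
        ((δ ^ 2) ^ k * ∏ e ∈ A, (δ * a ^ (2 * (if e ∈ P then (1 : ℤ) else -1)))) =
      δ⁻¹ * a ^ Fintype.card E * (a ^ (-2 * (#(symmDiff A P) : ℤ)) * δ ^ g) := by
  have hδexp : -(V : ℤ) - 1 + ((2 * k + #A : ℕ) : ℤ) = -1 + g := by rw [h]; push_cast; ring
  rw [prod_mul_distrib, prod_const, prod_zpow_eq_zpow_sum ha]
  calc _ = δ ^ (-(V : ℤ) - 1 + ((2 * k + #A : ℕ) : ℤ)) *
          a ^ ((#(univ \ P) : ℤ) - #P + ∑ e ∈ A, 2 * (if e ∈ P then (1 : ℤ) else -1)) := by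
        rw [zpow_add₀ hδ, zpow_add₀ ha, zpow_natCast]; ring
    _ = δ ^ (-1 + (g : ℤ)) * a ^ ((Fintype.card E : ℤ) + -2 * #(symmDiff A P)) := by
        rw [hδexp, card_univ_sdiff_sub_card_add_sum_sign]; ring_nf
    _ = _ := by rw [zpow_add₀ hδ, zpow_add₀ ha, zpow_neg_one, zpow_natCast, zpow_natCast]; ring

end TaitGraph

/-- The state-sum content of Theorem 5.6: the Kauffman bracket of a planar link
diagram, written as the Potts-model state sum over spanning subgraphs of its
Tait graph, equals a vertex model built from arrow coverings of the unsigned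
embedded medial graph (with `t = -a²`). -/
theorem bracket_eq_unsigned_vertex_model {E : Type*} [Fintype E] [DecidableEq E]
    (P : Finset E) (V : ℕ) (k bdG bdR : Finset E → ℕ)
    (h1 : ∀ A : Finset E, 2 * k A + A.card = V + bdG A)
    (h2 : ∀ A : Finset E, bdG A = bdR (symmDiff A P))
    (C : Finset E → Type*) [∀ B, Fintype (C B)] [∀ B, DecidableEq (C B)]
    (hC : ∀ B : Finset E, Fintype.card (C B) = bdR B)
    (δc : ∀ B : Finset E, C B → Bool → ℤ)
    (h3 : ∀ (B : Finset E) (c : C B), δc B c true = -δc B c false)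
    (h4 : ∀ (B : Finset E) (c : C B), δc B c true = 1 ∨ δc B c true = -1)
    (F : Type*) [Field F] (a : F) (ha : a ≠ 0) (ha4 : a ^ 4 ≠ -1)
    (δ : F) (hδ : δ = -a ^ 2 - a ^ (-2 : ℤ)) :
    δ ^ (-(V : ℤ) - 1) * a ^ (((Finset.univ \ P).card : ℤ) - (P.card : ℤ)) *
        ∑ A : Finset E, (δ ^ 2) ^ k A *
          ∏ e ∈ A, (δ * a ^ (2 * (if e ∈ P then (1 : ℤ) else -1))) =
      δ⁻¹ * a ^ Fintype.card E *
        ∑ B : Finset E, a ^ (-2 * (B.card : ℤ)) *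
          ∑ f : C B → Bool, ∏ c : C B, (-a ^ 2) ^ δc B c (f c) := by
  have hδ₀ : δ ≠ 0 := hδ ▸ neg_sq_sub_zpow_neg_two_ne_zero ha ha4
  simp_rw [sum_prod_zpow_eq_add_inv_pow _ _ (h3 _) (h4 _), neg_sq_add_inv_neg_sq, ← hδ, hC,
    mul_sum]
  refine Fintype.sum_bijective (symmDiff · P) (symmDiff_left_involutive P).bijective _ _
    fun A => ?_
  rw [← h2]
  exact potts_term_eq_vertex_term hδ₀ ha P A (h1 A)
end
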